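/- arXiv:2308.10098 — 2 statements merged into one kernel-verified Lean document; each statement's English description precedes it below -/
import Mathlib

section
/- Let g : ℝⁿ → ℝ be convex and L-smooth with constant L_{∇g} > 0, let λ ∈ ℝ, α ≥ 0 and z ∈ ℝ^d. Let x̂₁, x̂₂, x̃₁, x̃₂ ∈ ℝⁿ and ε₁, ε₂ ≥ 0 with ‖x̂₁ − x̃₁‖ ≤ ε₁ and ‖x̂₂ − x̃₂‖ ≤ ε₂. Define Ū(x, ε) = g(x) + ‖∇g(x)‖ ε + (L_{∇g}/2) ε², U̲(x, ε) = g(x) − ‖∇g(x)‖ ε − (L_{∇g}/2) ε², ψ(α) = Ū(x̃₂, ε₂) − U̲(x̃₁, ε₁) + λ α ‖z‖², and ψ̃(α) = ψ(α) − (L_{∇g}/2) ε₁². If ψ̃(α) ≤ 0, then g(x̂₂) − g(x̂₁) ≤ −λ α ‖z‖². -/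
/-!
The descent lemma for the `L`-smooth function `g` bounds `g x̂₂` above by `Ū(x̃₂, ε₂)`, and the
first-order characterisation of convexity bounds `g x̂₁` below by `g x̃₁ - ‖∇g x̃₁‖ ε₁`, which is
`U̲(x̃₁, ε₁) + (L/2) ε₁²`. The difference of the two bounds is `ψ̃(α) - λ α ‖z‖²`.
-/

open Set InnerProductSpace

theorem le_add_deriv_add_half_of_deriv_le {φ φ' : ℝ → ℝ} {K : ℝ}
    (hφ : ∀ t, HasDerivAt φ (φ' t) t) (hbound : ∀ t ∈ Ico (0 : ℝ) 1, φ' t ≤ φ' 0 + K * t) :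
    φ 1 ≤ φ 0 + φ' 0 + K / 2 := by
  have hmodel : ∀ t, HasDerivAt (fun t => φ 0 + t * φ' 0 + K / 2 * t ^ 2) (φ' 0 + K * t) t := by
    intro t
    refine ((((hasDerivAt_id t).mul_const (φ' 0)).const_add (φ 0)).add
      ((hasDerivAt_pow 2 t).const_mul (K / 2))).congr_deriv ?_
    simp only [Nat.cast_ofNat]
    ring
  have := image_le_of_deriv_right_le_deriv_boundary
    (fun t _ => (hφ t).continuousAt.continuousWithinAt) (fun t _ => (hφ t).hasDerivWithinAt)
    (by simp) (fun t _ => (hmodel t).continuousAt.continuousWithinAt)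
    (fun t _ => (hmodel t).hasDerivWithinAt) hbound (right_mem_Icc.2 zero_le_one)
  simpa using this

section Gradient

variable {E : Type*} [NormedAddCommGroup E] [InnerProductSpace ℝ E] [CompleteSpace E] {g : E → ℝ}

theorem HasGradientAt.hasDerivAt_comp_add_smul {g' x v : E} {t : ℝ}
    (hg : HasGradientAt g g' (x + t • v)) :
    HasDerivAt (fun s : ℝ => g (x + s • v)) ⟪g', v⟫_ℝ t := by
  have hline : HasDerivAt (fun s : ℝ => x + s • v) v t := by
    simpa using ((hasDerivAt_id t).smul_const v).const_add x
  simpa [Function.comp_def] using hg.hasFDerivAt.comp_hasDerivAt t hline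

theorem ConvexOn.add_inner_gradient_le (hconv : ConvexOn ℝ univ g) {x : E}
    (hdiff : DifferentiableAt ℝ g x) (y : E) :
    g x + ⟪gradient g x, y - x⟫_ℝ ≤ g y := by
  have hline : ConvexOn ℝ univ (fun t : ℝ => g (x + t • (y - x))) := by
    have hcomp := hconv.comp_affineMap (AffineMap.lineMap x y)
    have hlineMap : g ∘ AffineMap.lineMap x y = fun t : ℝ => g (x + t • (y - x)) := by
      ext t
      simp only [Function.comp_apply, AffineMap.lineMap_apply_module]
      congr 1
      module
    rwa [hlineMap, preimage_univ] at hcomp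
  have hderiv : HasDerivAt (fun t : ℝ => g (x + t • (y - x))) ⟪gradient g x, y - x⟫_ℝ 0 :=
    HasGradientAt.hasDerivAt_comp_add_smul (by simpa using hdiff.hasGradientAt)
  have := hline.le_slope_of_hasDerivAt (mem_univ 0) (mem_univ 1) zero_lt_one hderiv
  simp only [slope_def_field, zero_smul, one_smul, add_zero, sub_zero, div_one,
    add_sub_cancel] at this
  linarith

theorem le_add_inner_gradient_add_sq_of_lipschitz_gradient {L : ℝ} (hdiff : Differentiable ℝ g)
    (hlip : ∀ x y, ‖gradient g x - gradient g y‖ ≤ L * ‖x - y‖) (x y : E) :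
    g y ≤ g x + ⟪gradient g x, y - x⟫_ℝ + L / 2 * ‖y - x‖ ^ 2 := by
  obtain ⟨v, rfl⟩ : ∃ v, y = x + v := ⟨y - x, by abel⟩
  have hderiv (t : ℝ) : HasDerivAt (fun s : ℝ => g (x + s • v)) ⟪gradient g (x + t • v), v⟫_ℝ t :=
    (hdiff _).hasGradientAt.hasDerivAt_comp_add_smul
  have hbound (t : ℝ) (ht : t ∈ Ico (0 : ℝ) 1) :
      ⟪gradient g (x + t • v), v⟫_ℝ ≤ ⟪gradient g (x + (0 : ℝ) • v), v⟫_ℝ + L * ‖v‖ ^ 2 * t := by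
    have hgrowth : ⟪gradient g (x + t • v) - gradient g x, v⟫_ℝ ≤ L * ‖v‖ ^ 2 * t := calc
      _ ≤ ‖gradient g (x + t • v) - gradient g x‖ * ‖v‖ := real_inner_le_norm _ _
      _ ≤ L * ‖x + t • v - x‖ * ‖v‖ := by gcongr; exact hlip _ _
      _ = L * ‖v‖ ^ 2 * t := by
        rw [add_sub_cancel_left, norm_smul, Real.norm_eq_abs, abs_of_nonneg ht.1]; ring
    rw [inner_sub_left] at hgrowth
    rw [zero_smul, add_zero]
    linarith
  have := le_add_deriv_add_half_of_deriv_le hderiv hbound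
  simp only [zero_smul, add_zero, one_smul] at this
  rw [add_sub_cancel_left]
  linarith

theorem le_add_norm_gradient_mul_add_sq {L ε : ℝ} (hL : 0 ≤ L) (hdiff : Differentiable ℝ g)
    (hlip : ∀ x y, ‖gradient g x - gradient g y‖ ≤ L * ‖x - y‖) {x y : E} (hxy : ‖y - x‖ ≤ ε) :
    g y ≤ g x + ‖gradient g x‖ * ε + L / 2 * ε ^ 2 :=
  calc g y ≤ g x + ⟪gradient g x, y - x⟫_ℝ + L / 2 * ‖y - x‖ ^ 2 :=
        le_add_inner_gradient_add_sq_of_lipschitz_gradient hdiff hlip x y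
    _ ≤ g x + ‖gradient g x‖ * ‖y - x‖ + L / 2 * ‖y - x‖ ^ 2 := by
        gcongr; exact real_inner_le_norm _ _
    _ ≤ g x + ‖gradient g x‖ * ε + L / 2 * ε ^ 2 := by gcongr

theorem ConvexOn.sub_norm_gradient_mul_le {ε : ℝ} (hconv : ConvexOn ℝ univ g) {x y : E}
    (hdiff : DifferentiableAt ℝ g x) (hxy : ‖y - x‖ ≤ ε) :
    g x - ‖gradient g x‖ * ε ≤ g y :=
  calc g x - ‖gradient g x‖ * ε ≤ g x - ‖gradient g x‖ * ‖y - x‖ := by gcongr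
    _ ≤ g x + ⟪gradient g x, y - x⟫_ℝ := by
        have := neg_abs_le ⟪gradient g x, y - x⟫_ℝ
        linarith [abs_real_inner_le_norm (gradient g x) (y - x)]
    _ ≤ g y := hconv.add_inner_gradient_le hdiff y

end Gradient

theorem inexact_line_search_sufficient_decrease_convex_general
    {n d : ℕ} (g : EuclideanSpace ℝ (Fin n) → ℝ) (Lg : ℝ) (hLg : 0 < Lg)
    (hconv : ConvexOn ℝ Set.univ g)
    (hdiff : Differentiable ℝ g)
    (hlip : ∀ x y, ‖gradient g x - gradient g y‖ ≤ Lg * ‖x - y‖)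
    (lam α : ℝ) (z : EuclideanSpace ℝ (Fin d))
    (xhat₁ xhat₂ xtilde₁ xtilde₂ : EuclideanSpace ℝ (Fin n))
    (ε₁ ε₂ : ℝ)
    (happrox₁ : ‖xhat₁ - xtilde₁‖ ≤ ε₁) (happrox₂ : ‖xhat₂ - xtilde₂‖ ≤ ε₂)
    (hψt : ((g xtilde₂ + ‖gradient g xtilde₂‖ * ε₂ + Lg / 2 * ε₂ ^ 2)
        - (g xtilde₁ - ‖gradient g xtilde₁‖ * ε₁ - Lg / 2 * ε₁ ^ 2)
        + lam * α * ‖z‖ ^ 2) - Lg / 2 * ε₁ ^ 2 ≤ 0) :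
    g xhat₂ - g xhat₁ ≤ -(lam * α * ‖z‖ ^ 2) := by
  have hupper := le_add_norm_gradient_mul_add_sq hLg.le hdiff hlip happrox₂
  have hlower := hconv.sub_norm_gradient_mul_le (hdiff xtilde₁) happrox₁
  linarith

theorem inexact_line_search_sufficient_decrease_convex
    {n d : ℕ} (g : EuclideanSpace ℝ (Fin n) → ℝ) (Lg : ℝ) (hLg : 0 < Lg)
    (hconv : ConvexOn ℝ Set.univ g)
    (hdiff : Differentiable ℝ g)
    (hlip : ∀ x y, ‖gradient g x - gradient g y‖ ≤ Lg * ‖x - y‖)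
    (lam α : ℝ) (hα : 0 ≤ α) (z : EuclideanSpace ℝ (Fin d))
    (xhat₁ xhat₂ xtilde₁ xtilde₂ : EuclideanSpace ℝ (Fin n))
    (ε₁ ε₂ : ℝ) (hε₁ : 0 ≤ ε₁) (hε₂ : 0 ≤ ε₂)
    (happrox₁ : ‖xhat₁ - xtilde₁‖ ≤ ε₁) (happrox₂ : ‖xhat₂ - xtilde₂‖ ≤ ε₂)
    (hψt : ((g xtilde₂ + ‖gradient g xtilde₂‖ * ε₂ + Lg / 2 * ε₂ ^ 2)
        - (g xtilde₁ - ‖gradient g xtilde₁‖ * ε₁ - Lg / 2 * ε₁ ^ 2)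
        + lam * α * ‖z‖ ^ 2) - Lg / 2 * ε₁ ^ 2 ≤ 0) :
    g xhat₂ - g xhat₁ ≤ -(lam * α * ‖z‖ ^ 2) :=
  inexact_line_search_sufficient_decrease_convex_general g Lg hLg hconv hdiff hlip lam α z xhat₁
    xhat₂ xtilde₁ xtilde₂ ε₁ ε₂ happrox₁ happrox₂ hψt
end

section
/- Let g : ℝⁿ → ℝ be L-smooth with constant L_{∇g} > 0, let x̂ : ℝ^d → ℝⁿ, and suppose f := g ∘ x̂ is L-smooth with constant L_{∇f} > 0. Fix θ ∈ ℝ^d, z ∈ ℝ^d, α ≥ 0, η ≤ 1 and λ ∈ ℝ, set θ' = θ − α z, and assume ‖z − ∇f(θ)‖ ≤ (1 − η)‖z‖. Let x̃₁, x̃₂ ∈ ℝⁿ and ε₁, ε₂ ≥ 0 satisfy ‖x̃₁ − x̂(θ)‖ ≤ ε₁ and ‖x̃₂ − x̂(θ')‖ ≤ ε₂. Define w = ‖∇g(x̃₁)‖ + ‖∇g(x̃₂)‖, ε̄ = max{ε₁, ε₂}, ψ(α) = [g(x̃₂) + ‖∇g(x̃₂)‖ ε₂ + (L_{∇g}/2)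 ε₂²] − [g(x̃₁) − ‖∇g(x̃₁)‖ ε₁ − (L_{∇g}/2) ε₁²] + λ α ‖z‖², and φ(α) = 2 w ε̄ + 2 L_{∇g} ε̄² + (α² L_{∇f}/2 + (λ − η) α) ‖z‖². Then ψ(α) ≤ φ(α). -/
/-!
Both brackets of `ψ` are descent-lemma bounds for `g` around the approximate solutions, so up to
`2 w ε̄ + 2 L_{∇g} ε̄²` they reduce to `f θ' - f θ`. The descent lemma for `f` along `-z`, together
with `⟪∇f θ, z⟫ ≥ η ‖z‖²` (which is what the relative error bound on `z` says), gives
`f θ' - f θ ≤ (α² L_{∇f} / 2 - η α) ‖z‖²`.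
-/

open InnerProductSpace Set

theorem norm_sub_sub_fderiv_le_of_lipschitz_fderiv {E G : Type*}
    [NormedAddCommGroup E] [NormedSpace ℝ E] [NormedAddCommGroup G] [NormedSpace ℝ G]
    {g : E → G} {L : ℝ} (hg : Differentiable ℝ g)
    (hlip : ∀ x y, ‖fderiv ℝ g x - fderiv ℝ g y‖ ≤ L * ‖x - y‖) (x y : E) :
    ‖g y - g x - fderiv ℝ g x (y - x)‖ ≤ L / 2 * ‖y - x‖ ^ 2 := by
  set v := y - x
  set φ : ℝ → G := fun t => g (x + t • v) - t • fderiv ℝ g x v - g x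
  have hφ : ∀ t : ℝ, HasDerivAt φ ((fderiv ℝ g (x + t • v) - fderiv ℝ g x) v) t := by
    intro t
    have hline : HasDerivAt (fun t : ℝ => x + t • v) v t := by
      simpa using ((hasDerivAt_id t).smul_const v).const_add x
    have := (((hg _).hasFDerivAt.comp_hasDerivAt t hline).sub
      ((hasDerivAt_id t).smul_const (fderiv ℝ g x v))).sub_const (g x)
    simpa [φ] using this
  have hB : ∀ t : ℝ, HasDerivAt (fun t => L / 2 * ‖v‖ ^ 2 * t ^ 2) (L * ‖v‖ ^ 2 * t) t :=
    fun t => ((hasDerivAt_pow 2 t).const_mul (L / 2 * ‖v‖ ^ 2)).congr_deriv (by push_cast; ring)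
  have hbound : ∀ t ∈ Ico (0 : ℝ) 1,
      ‖(fderiv ℝ g (x + t • v) - fderiv ℝ g x) v‖ ≤ L * ‖v‖ ^ 2 * t := by
    rintro t ⟨ht, -⟩
    calc ‖(fderiv ℝ g (x + t • v) - fderiv ℝ g x) v‖
        ≤ ‖fderiv ℝ g (x + t • v) - fderiv ℝ g x‖ * ‖v‖ := ContinuousLinearMap.le_opNorm _ _
      _ ≤ L * ‖t • v‖ * ‖v‖ := by
          gcongr
          simpa using hlip (x + t • v) x
      _ = L * ‖v‖ ^ 2 * t := by
          rw [norm_smul, Real.norm_of_nonneg ht]; ring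
  have := image_norm_le_of_norm_deriv_right_le_deriv_boundary
    (fun t _ => (hφ t).continuousAt.continuousWithinAt) (fun t _ => (hφ t).hasDerivWithinAt)
    (by simp [φ]) hB hbound (right_mem_Icc.2 zero_le_one)
  simp only [φ, v, one_smul, add_sub_cancel, one_pow, mul_one] at this
  rwa [sub_right_comm] at this

theorem real_inner_ge_of_norm_sub_le {F : Type*} [NormedAddCommGroup F] [InnerProductSpace ℝ F]
    {a z : F} {η : ℝ} (h : ‖z - a‖ ≤ (1 - η) * ‖z‖) : η * ‖z‖ ^ 2 ≤ ⟪a, z⟫_ℝ := by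
  have hz : ⟪z - a, z⟫_ℝ ≤ (1 - η) * ‖z‖ * ‖z‖ :=
    (real_inner_le_norm _ _).trans (mul_le_mul_of_nonneg_right h (norm_nonneg z))
  rw [inner_sub_left, real_inner_self_eq_norm_sq] at hz
  linarith

section LipschitzGradient

variable {F : Type*} [NormedAddCommGroup F] [InnerProductSpace ℝ F] [CompleteSpace F]
  {g : F → ℝ} {L : ℝ}

theorem abs_sub_sub_inner_gradient_le (hg : Differentiable ℝ g)
    (hlip : ∀ x y, ‖gradient g x - gradient g y‖ ≤ L * ‖x - y‖) (x y : F) :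
    |g y - g x - ⟪gradient g x, y - x⟫_ℝ| ≤ L / 2 * ‖y - x‖ ^ 2 := by
  have hlip' : ∀ x y, ‖fderiv ℝ g x - fderiv ℝ g y‖ ≤ L * ‖x - y‖ := fun x y => by
    simpa only [← toDual_gradient, ← map_sub, LinearIsometryEquiv.norm_map] using hlip x y
  simpa only [inner_gradient_left, ← Real.norm_eq_abs] using
    norm_sub_sub_fderiv_le_of_lipschitz_fderiv hg hlip' x y

theorem abs_sub_le_norm_gradient_mul_add (hL : 0 ≤ L) (hg : Differentiable ℝ g)
    (hlip : ∀ x y, ‖gradient g x - gradient g y‖ ≤ L * ‖x - y‖) {x y : F} {ε : ℝ}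
    (h : ‖x - y‖ ≤ ε) :
    |g y - g x| ≤ ‖gradient g x‖ * ε + L / 2 * ε ^ 2 := by
  rw [norm_sub_rev] at h
  calc |g y - g x|
      = |(g y - g x - ⟪gradient g x, y - x⟫_ℝ) + ⟪gradient g x, y - x⟫_ℝ| := by ring_nf
    _ ≤ L / 2 * ‖y - x‖ ^ 2 + ‖gradient g x‖ * ‖y - x‖ :=
        (abs_add_le _ _).trans
          (add_le_add (abs_sub_sub_inner_gradient_le hg hlip x y) (abs_real_inner_le_norm _ _))
    _ ≤ ‖gradient g x‖ * ε + L / 2 * ε ^ 2 := by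
        rw [add_comm]; gcongr

theorem apply_sub_smul_le_of_norm_sub_gradient_le (hg : Differentiable ℝ g)
    (hlip : ∀ x y, ‖gradient g x - gradient g y‖ ≤ L * ‖x - y‖) {θ z : F} {α η : ℝ}
    (hα : 0 ≤ α) (herr : ‖z - gradient g θ‖ ≤ (1 - η) * ‖z‖) :
    g (θ - α • z) ≤ g θ + (α ^ 2 * L / 2 - η * α) * ‖z‖ ^ 2 := by
  have hdescent := (abs_le.1 (abs_sub_sub_inner_gradient_le hg hlip θ (θ - α • z))).2
  have hinner := mul_le_mul_of_nonneg_left (real_inner_ge_of_norm_sub_le herr) hα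
  rw [sub_sub_cancel_left, norm_neg, norm_smul, Real.norm_of_nonneg hα, inner_neg_right,
    real_inner_smul_right] at hdescent
  linarith

end LipschitzGradient

theorem psi_le_phi_general
    {n d : ℕ} (g : EuclideanSpace ℝ (Fin n) → ℝ)
    (xhat : EuclideanSpace ℝ (Fin d) → EuclideanSpace ℝ (Fin n))
    (Lg Lf : ℝ) (hLg : 0 < Lg)
    (hgdiff : Differentiable ℝ g)
    (hglip : ∀ x y, ‖gradient g x - gradient g y‖ ≤ Lg * ‖x - y‖)
    (hfdiff : Differentiable ℝ (fun θ => g (xhat θ)))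
    (hflip : ∀ θ₁ θ₂, ‖gradient (fun θ => g (xhat θ)) θ₁
        - gradient (fun θ => g (xhat θ)) θ₂‖ ≤ Lf * ‖θ₁ - θ₂‖)
    (θ z : EuclideanSpace ℝ (Fin d)) (α η lam : ℝ)
    (hα : 0 ≤ α)
    (herr : ‖z - gradient (fun θ' => g (xhat θ')) θ‖ ≤ (1 - η) * ‖z‖)
    (xtilde₁ xtilde₂ : EuclideanSpace ℝ (Fin n))
    (ε₁ ε₂ : ℝ)
    (happrox₁ : ‖xtilde₁ - xhat θ‖ ≤ ε₁)
    (happrox₂ : ‖xtilde₂ - xhat (θ - α • z)‖ ≤ ε₂) :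
    (g xtilde₂ + ‖gradient g xtilde₂‖ * ε₂ + Lg / 2 * ε₂ ^ 2)
      - (g xtilde₁ - ‖gradient g xtilde₁‖ * ε₁ - Lg / 2 * ε₁ ^ 2)
      + lam * α * ‖z‖ ^ 2
    ≤ 2 * (‖gradient g xtilde₁‖ + ‖gradient g xtilde₂‖) * max ε₁ ε₂
      + 2 * Lg * (max ε₁ ε₂) ^ 2
      + (α ^ 2 * Lf / 2 + (lam - η) * α) * ‖z‖ ^ 2 := by
  have h₁ := abs_le.1 (abs_sub_le_norm_gradient_mul_add hLg.le hgdiff hglip happrox₁)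
  have h₂ := abs_le.1 (abs_sub_le_norm_gradient_mul_add hLg.le hgdiff hglip happrox₂)
  have hf := apply_sub_smul_le_of_norm_sub_gradient_le hfdiff hflip hα herr
  have hw : ‖gradient g xtilde₁‖ * ε₁ + ‖gradient g xtilde₂‖ * ε₂
      ≤ (‖gradient g xtilde₁‖ + ‖gradient g xtilde₂‖) * max ε₁ ε₂ := by
    rw [add_mul]
    gcongr
    exacts [le_max_left _ _, le_max_right _ _]
  have hε : Lg * (ε₁ ^ 2 + ε₂ ^ 2) ≤ Lg * (2 * max ε₁ ε₂ ^ 2) := by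
    have hε₁ : 0 ≤ ε₁ := (norm_nonneg _).trans happrox₁
    have hε₂ : 0 ≤ ε₂ := (norm_nonneg _).trans happrox₂
    rw [two_mul]
    gcongr
    exacts [le_max_left _ _, le_max_right _ _]
  linarith [h₁.2, h₂.1]

theorem psi_le_phi
    {n d : ℕ} (g : EuclideanSpace ℝ (Fin n) → ℝ)
    (xhat : EuclideanSpace ℝ (Fin d) → EuclideanSpace ℝ (Fin n))
    (Lg Lf : ℝ) (hLg : 0 < Lg) (hLf : 0 < Lf)
    (hgdiff : Differentiable ℝ g)
    (hglip : ∀ x y, ‖gradient g x - gradient g y‖ ≤ Lg * ‖x - y‖)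
    (hfdiff : Differentiable ℝ (fun θ => g (xhat θ)))
    (hflip : ∀ θ₁ θ₂, ‖gradient (fun θ => g (xhat θ)) θ₁
        - gradient (fun θ => g (xhat θ)) θ₂‖ ≤ Lf * ‖θ₁ - θ₂‖)
    (θ z : EuclideanSpace ℝ (Fin d)) (α η lam : ℝ)
    (hα : 0 ≤ α) (hη : η ≤ 1)
    (herr : ‖z - gradient (fun θ' => g (xhat θ')) θ‖ ≤ (1 - η) * ‖z‖)
    (xtilde₁ xtilde₂ : EuclideanSpace ℝ (Fin n))
    (ε₁ ε₂ : ℝ) (hε₁ : 0 ≤ ε₁) (hε₂ : 0 ≤ ε₂)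
    (happrox₁ : ‖xtilde₁ - xhat θ‖ ≤ ε₁)
    (happrox₂ : ‖xtilde₂ - xhat (θ - α • z)‖ ≤ ε₂) :
    (g xtilde₂ + ‖gradient g xtilde₂‖ * ε₂ + Lg / 2 * ε₂ ^ 2)
      - (g xtilde₁ - ‖gradient g xtilde₁‖ * ε₁ - Lg / 2 * ε₁ ^ 2)
      + lam * α * ‖z‖ ^ 2
    ≤ 2 * (‖gradient g xtilde₁‖ + ‖gradient g xtilde₂‖) * max ε₁ ε₂
      + 2 * Lg * (max ε₁ ε₂) ^ 2
      + (α ^ 2 * Lf / 2 + (lam - η) * α) * ‖z‖ ^ 2 :=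
  psi_le_phi_general g xhat Lg Lf hLg hgdiff hglip hfdiff hflip θ z α η lam hα herr xtilde₁ xtilde₂
    ε₁ ε₂ happrox₁ happrox₂
end
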